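/- Let X̄(t) = −sin t·F₁₃ + cos t·F₂₃ + F₄₅, Ȳ(t) = sin t·F₁₃ − cos t·F₂₃ + F₄₅, H₁ = 2F₂₃ + F₄₅, and define the Q-orthogonal projections away from H₁ by X*(t) = X̄(t) − (Q(X̄(t),H₁)/5)·H₁ and Y*(t) = Ȳ(t) − (Q(Ȳ(t),H₁)/5)·H₁. Then for all real t: Q(X̄(t), H₁) = 2cos t + 1, Q(Ȳ(t), H₁) = −2cos t + 1, Q(X*(t), X*(t)) = (5 + 4sin²t − 4cos t)/5, Q(Y*(t), Y*(t)) = (5 + 4sin²t + 4cos t)/5, and Q(X*(t), Y*(t)) = −(1 − 4cos²t)/5. (These are the metric functions f₁, g₁, h₁ of the cohomogeneity one action of SO(4) on the Berger space B⁷ = SO(5)/SO(3).) -/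

import Mathlib

open Matrix

/-- `F_{ij}` (with `1`-based labels realized by `0`-based indices) -/
def F (i j : Fin 5) : Matrix (Fin 5) (Fin 5) ℝ :=
  Matrix.single i j 1 - Matrix.single j i 1

/-- the biinvariant inner product `Q(X,Y) = -(1/2) tr(XY)` on `so(5)` -/
noncomputable def Q (X Y : Matrix (Fin 5) (Fin 5) ℝ) : ℝ := -(1 / 2) * (X * Y).trace

/-- `X̄(t) = -sin t·F₁₃ + cos t·F₂₃ + F₄₅` -/
noncomputable def Xbar (t : ℝ) : Matrix (Fin 5) (Fin 5) ℝ :=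
  (-Real.sin t) • F 0 2 + Real.cos t • F 1 2 + F 3 4

/-- `Ȳ(t) = sin t·F₁₃ - cos t·F₂₃ + F₄₅` -/
noncomputable def Ybar (t : ℝ) : Matrix (Fin 5) (Fin 5) ℝ :=
  Real.sin t • F 0 2 + (-Real.cos t) • F 1 2 + F 3 4

/-- `H₁ = 2F₂₃ + F₄₅` -/
noncomputable def H1 : Matrix (Fin 5) (Fin 5) ℝ := (2 : ℝ) • F 1 2 + F 3 4

/-- the `Q`-orthogonal projection of `X̄(t)` away from `H₁` -/
noncomputable def Xstar (t : ℝ) : Matrix (Fin 5) (Fin 5) ℝ :=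
  Xbar t - (Q (Xbar t) H1 / 5) • H1

/-- the `Q`-orthogonal projection of `Ȳ(t)` away from `H₁` -/
noncomputable def Ystar (t : ℝ) : Matrix (Fin 5) (Fin 5) ℝ :=
  Ybar t - (Q (Ybar t) H1 / 5) • H1


lemma Qcalc (a b c u v w : ℝ) :
    Q (a • F 0 2 + b • F 1 2 + c • F 3 4) (u • F 0 2 + v • F 1 2 + w • F 3 4)
      = a * u + b * v + c * w := by
  simp [Q, F, Matrix.trace, Matrix.mul_apply, Fin.sum_univ_five,
    Matrix.single, Matrix.sub_apply, Matrix.add_apply, Matrix.smul_apply]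
  ring

/-- The metric functions `f₁, g₁, h₁` of the cohomogeneity one action of `SO(4)` on the
Berger space `B⁷ = SO(5)/SO(3)`. -/
theorem berger_metric_functions (t : ℝ) :
    Q (Xbar t) H1 = 2 * Real.cos t + 1 ∧
    Q (Ybar t) H1 = -2 * Real.cos t + 1 ∧
    Q (Xstar t) (Xstar t) = (5 + 4 * Real.sin t ^ 2 - 4 * Real.cos t) / 5 ∧
    Q (Ystar t) (Ystar t) = (5 + 4 * Real.sin t ^ 2 + 4 * Real.cos t) / 5 ∧
    Q (Xstar t) (Ystar t) = -(1 - 4 * Real.cos t ^ 2) / 5 := by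
  have hX : Xbar t = (-Real.sin t) • F 0 2 + Real.cos t • F 1 2 + (1:ℝ) • F 3 4 := by
    rw [Xbar, one_smul]
  have hY : Ybar t = Real.sin t • F 0 2 + (-Real.cos t) • F 1 2 + (1:ℝ) • F 3 4 := by
    rw [Ybar, one_smul]
  have hH : H1 = (0:ℝ) • F 0 2 + (2:ℝ) • F 1 2 + (1:ℝ) • F 3 4 := by
    rw [H1, one_smul, zero_smul, zero_add]
  have h1 : Q (Xbar t) H1 = 2 * Real.cos t + 1 := by
    rw [hX, hH, Qcalc]; ring
  have h2 : Q (Ybar t) H1 = -2 * Real.cos t + 1 := by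
    rw [hY, hH, Qcalc]; ring
  have hXs : Xstar t = (-Real.sin t) • F 0 2
      + (Real.cos t - (2 * Real.cos t + 1)/5 * 2) • F 1 2
      + (1 - (2 * Real.cos t + 1)/5) • F 3 4 := by
    rw [Xstar, h1, hX, hH]
    module
  have hYs : Ystar t = Real.sin t • F 0 2
      + (-Real.cos t - (-2 * Real.cos t + 1)/5 * 2) • F 1 2
      + (1 - (-2 * Real.cos t + 1)/5) • F 3 4 := by
    rw [Ystar, h2, hY, hH]
    module
  have hpyth := Real.sin_sq_add_cos_sq t
  refine ⟨h1, h2, ?_, ?_, ?_⟩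
  · rw [hXs, Qcalc]; nlinarith [hpyth]
  · rw [hYs, Qcalc]; nlinarith [hpyth]
  · rw [hXs, hYs, Qcalc]; nlinarith [hpyth]
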